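/- Let f ∈ L^p_loc(ℝ), 1 ≤ p < ∞, and let g(τ) = τ^{-p} ∫_{-1/2}^{1/2-τ} |f(t+τ)-f(t)|^p dt. If φ : (0,1) → [0,∞) is nonincreasing, then ∫_0^1 g(τ) φ(τ) dτ ≥ (1/2) (∫_0^1 g(τ) dτ)(∫_0^1 φ(τ) dτ). -/

import Mathlib

/-!
Two ingredients. First, the triangle inequality for the increment `f (t + 2σ) - f t` through
`f (t + σ)`, together with translation invariance, gives `g (2σ) ≤ g σ`. Second, this doubling
property alone yields the inequality (Bourgain–Brezis–Mironescu, Lemma 2): iterating it gives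
`∫₀ᵗ g ≥ (t / 2) ∫₀¹ g` for `t ∈ [0, 1]`, and since `φ` is nonincreasing each superlevel set
`{φ > l}` is, inside `(0, 1)`, an interval of length `t` with left end `0`. Comparing the
layer-cake formulas for `∫ φ` and for `∫ g φ` level by level concludes.
-/

open MeasureTheory Set
open scoped ENNReal

lemma AntitoneOn.exists_Ioo_subset_inter_setOf_lt_subset_Ioc {α β : Type*}
    [ConditionallyCompleteLinearOrder α] [Preorder β] {φ : α → β} {a b : α} (hab : a ≤ b)
    (hφ : AntitoneOn φ (Ioo a b)) (l : β) :
    ∃ t ∈ Icc a b, Ioo a t ⊆ Ioo a b ∩ {x | l < φ x} ∧ Ioo a b ∩ {x | l < φ x} ⊆ Ioc a t := by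
  set S := Ioo a b ∩ {x | l < φ x}
  have hbdd : BddAbove (insert a S) := ⟨b, by
    rintro x (rfl | hx)
    exacts [hab, hx.1.2.le]⟩
  refine ⟨sSup (insert a S), ⟨le_csSup hbdd (mem_insert a S), ?_⟩, ?_, ?_⟩
  · exact csSup_le (insert_nonempty a S) (by rintro x (rfl | hx); exacts [hab, hx.1.2.le])
  · intro x hx
    obtain ⟨y, hy, hxy⟩ := exists_lt_of_lt_csSup (insert_nonempty a S) hx.2
    rcases hy with rfl | hy
    · exact absurd hx.1 (not_lt.2 hxy.le)
    · exact ⟨⟨hx.1, hxy.trans hy.1.2⟩, hy.2.trans_le (hφ ⟨hx.1, hxy.trans hy.1.2⟩ hy.1 hxy.le)⟩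
  · exact fun x hx => ⟨hx.1.1, le_csSup hbdd (mem_insert_of_mem a hx)⟩

lemma le_comp_two_inv_pow_mul {β : Type*} [Preorder β] {G : ℝ → β}
    (hG : ∀ τ ∈ Ioo (0:ℝ) 1, G τ ≤ G (τ / 2)) (n : ℕ) {τ : ℝ} (hτ : τ ∈ Ioo (0:ℝ) 1) :
    G τ ≤ G (2⁻¹ ^ n * τ) := by
  induction n with
  | zero => simp
  | succ n ih =>
    have hmem : 2⁻¹ ^ n * τ ∈ Ioo (0:ℝ) 1 :=
      ⟨by have := hτ.1; positivity,
        (mul_le_of_le_one_left hτ.1.le (pow_le_one₀ (by norm_num) (by norm_num))).trans_lt hτ.2⟩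
    calc G τ ≤ G (2⁻¹ ^ n * τ) := ih
      _ ≤ G (2⁻¹ ^ n * τ / 2) := hG _ hmem
      _ = G (2⁻¹ ^ (n + 1) * τ) := by ring_nf

lemma lintegral_Ioo_zero_eq_ofReal_mul_lintegral_comp_mul {c : ℝ} (hc : 0 < c)
    (G : ℝ → ℝ≥0∞) :
    ∫⁻ τ in Ioo 0 c, G τ = ENNReal.ofReal c * ∫⁻ u in Ioo 0 1, G (c * u) := by
  have himage : (c * ·) '' Ioo (0:ℝ) 1 = Ioo 0 c := by
    simp [image_mul_left_Ioo hc]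
  have hderiv : ∀ u ∈ Ioo (0:ℝ) 1, HasDerivWithinAt (c * ·) c (Ioo 0 1) u := fun u _ => by
    simpa using ((hasDerivAt_id u).const_mul c).hasDerivWithinAt
  rw [← himage, lintegral_image_eq_lintegral_abs_deriv_mul measurableSet_Ioo hderiv
    (mul_right_injective₀ hc.ne').injOn, abs_of_pos hc,
    lintegral_const_mul' _ _ ENNReal.ofReal_ne_top]

lemma two_inv_mul_lintegral_mul_ofReal_le_lintegral_Ioo {G : ℝ → ℝ≥0∞}
    (hG : ∀ τ ∈ Ioo (0:ℝ) 1, G τ ≤ G (τ / 2)) {t : ℝ} (ht : t ∈ Icc (0:ℝ) 1) :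
    2⁻¹ * (∫⁻ τ in Ioo 0 1, G τ) * ENNReal.ofReal t ≤ ∫⁻ τ in Ioo 0 t, G τ := by
  rcases ht.1.eq_or_lt with rfl | ht0
  · simp
  obtain ⟨n, hct, htc⟩ := exists_nat_pow_near_of_lt_one ht0 ht.2 (by norm_num : (0:ℝ) < 2⁻¹)
    (by norm_num)
  set c : ℝ := 2⁻¹ ^ (n + 1)
  have ht2c : t ≤ 2 * c := by simpa [c, pow_succ, mul_comm, ← mul_assoc] using htc
  calc 2⁻¹ * (∫⁻ τ in Ioo 0 1, G τ) * ENNReal.ofReal t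
      ≤ 2⁻¹ * (∫⁻ τ in Ioo 0 1, G τ) * ENNReal.ofReal (2 * c) := by gcongr
    _ = ENNReal.ofReal c * ∫⁻ τ in Ioo 0 1, G τ := by
      rw [ENNReal.ofReal_mul zero_le_two, ENNReal.ofReal_ofNat, mul_comm, ← mul_assoc,
        mul_right_comm _ _ 2⁻¹, ENNReal.mul_inv_cancel two_ne_zero ENNReal.ofNat_ne_top, one_mul]
    _ ≤ ENNReal.ofReal c * ∫⁻ u in Ioo 0 1, G (c * u) := mul_le_mul_right
      (setLIntegral_mono' measurableSet_Ioo fun u hu => le_comp_two_inv_pow_mul hG (n + 1) hu) _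
    _ = ∫⁻ τ in Ioo 0 c, G τ :=
      (lintegral_Ioo_zero_eq_ofReal_mul_lintegral_comp_mul (by positivity) G).symm
    _ ≤ ∫⁻ τ in Ioo 0 t, G τ := lintegral_mono_set (Ioo_subset_Ioo_right hct.le)

lemma const_mul_lintegral_ofReal_le_of_meas_lt_le {α : Type*} [MeasurableSpace α]
    {μ ν : Measure α} {φ : α → ℝ} (hφν : 0 ≤ᵐ[ν] φ) (hφμ : 0 ≤ᵐ[μ] φ)
    (hφνm : AEMeasurable φ ν) (hφμm : AEMeasurable φ μ) {c : ℝ≥0∞}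
    (h : ∀ l > 0, c * ν {x | l < φ x} ≤ μ {x | l < φ x}) :
    c * ∫⁻ x, ENNReal.ofReal (φ x) ∂ν ≤ ∫⁻ x, ENNReal.ofReal (φ x) ∂μ := by
  rw [lintegral_eq_lintegral_meas_lt ν hφν hφνm, lintegral_eq_lintegral_meas_lt μ hφμ hφμm]
  exact (lintegral_const_mul_le _ _).trans (setLIntegral_mono' measurableSet_Ioi h)

theorem two_inv_mul_lintegral_mul_lintegral_le_lintegral_mul {G : ℝ → ℝ≥0∞}
    (hGm : AEMeasurable G (volume.restrict (Ioo 0 1)))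
    (hG : ∀ τ ∈ Ioo (0:ℝ) 1, G τ ≤ G (τ / 2)) {φ : ℝ → ℝ} (hφ0 : ∀ τ ∈ Ioo (0:ℝ) 1, 0 ≤ φ τ)
    (hφ : AntitoneOn φ (Ioo 0 1)) :
    2⁻¹ * (∫⁻ τ in Ioo 0 1, G τ) * ∫⁻ τ in Ioo 0 1, ENNReal.ofReal (φ τ)
      ≤ ∫⁻ τ in Ioo 0 1, G τ * ENNReal.ofReal (φ τ) := by
  set ν := volume.restrict (Ioo (0:ℝ) 1)
  have hφν : 0 ≤ᵐ[ν] φ := ae_restrict_of_forall_mem measurableSet_Ioo hφ0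
  have hφm : AEMeasurable φ ν := aemeasurable_restrict_of_antitoneOn measurableSet_Ioo hφ
  have hac := withDensity_absolutelyContinuous ν G
  refine (const_mul_lintegral_ofReal_le_of_meas_lt_le hφν (hac.ae_le hφν) hφm (hφm.mono_ac hac)
    fun l _ => ?_).trans_eq (lintegral_withDensity_eq_lintegral_mul₀ hGm hφm.ennreal_ofReal)
  obtain ⟨t, ht, hsub, hsup⟩ := hφ.exists_Ioo_subset_inter_setOf_lt_subset_Ioc zero_le_one l
  have hν : ν {x | l < φ x} ≤ ENNReal.ofReal t := by
    rw [Measure.restrict_apply' measurableSet_Ioo, inter_comm]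
    simpa using measure_mono (μ := volume) hsup
  have hμ : ∫⁻ τ in Ioo 0 t, G τ ≤ ν.withDensity G {x | l < φ x} := by
    calc ∫⁻ τ in Ioo 0 t, G τ = ν.withDensity G (Ioo 0 t) := by
          rw [withDensity_apply _ measurableSet_Ioo, Measure.restrict_restrict measurableSet_Ioo,
            inter_eq_left.2 (Ioo_subset_Ioo_right ht.2)]
      _ ≤ ν.withDensity G {x | l < φ x} := measure_mono (hsub.trans inter_subset_right)
  calc 2⁻¹ * (∫⁻ τ in Ioo 0 1, G τ) * ν {x | l < φ x}
      ≤ 2⁻¹ * (∫⁻ τ in Ioo 0 1, G τ) * ENNReal.ofReal t := by gcongr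
    _ ≤ ∫⁻ τ in Ioo 0 t, G τ := two_inv_mul_lintegral_mul_ofReal_le_lintegral_Ioo hG ht
    _ ≤ _ := hμ

lemma ofReal_integral_le_lintegral_ofReal {α : Type*} [MeasurableSpace α] {μ : Measure α}
    {f : α → ℝ} (hf0 : 0 ≤ᵐ[μ] f) (hfm : AEStronglyMeasurable f μ) :
    ENNReal.ofReal (∫ x, f x ∂μ) ≤ ∫⁻ x, ENNReal.ofReal (f x) ∂μ := by
  rw [integral_eq_lintegral_of_nonneg_ae hf0 hfm]
  exact ENNReal.ofReal_toReal_le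

theorem half_mul_integral_mul_integral_le_integral_mul {g φ : ℝ → ℝ}
    (hg0 : ∀ τ ∈ Ioo (0:ℝ) 1, 0 ≤ g τ) (hg : ∀ τ ∈ Ioo (0:ℝ) 1, g τ ≤ g (τ / 2))
    (hgm : AEStronglyMeasurable g (volume.restrict (Ioo 0 1)))
    (hφ0 : ∀ τ ∈ Ioo (0:ℝ) 1, 0 ≤ φ τ) (hφ : AntitoneOn φ (Ioo 0 1))
    (hgφ : IntegrableOn (fun τ => g τ * φ τ) (Ioo 0 1)) :
    (1/2) * (∫ τ in Ioo (0:ℝ) 1, g τ) * (∫ τ in Ioo (0:ℝ) 1, φ τ)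
      ≤ ∫ τ in Ioo (0:ℝ) 1, g τ * φ τ := by
  have hgφ0 : ∀ τ ∈ Ioo (0:ℝ) 1, 0 ≤ g τ * φ τ := fun τ hτ => mul_nonneg (hg0 τ hτ) (hφ0 τ hτ)
  rw [← ENNReal.ofReal_le_ofReal_iff (setIntegral_nonneg measurableSet_Ioo hgφ0),
    ofReal_integral_eq_lintegral_ofReal hgφ (ae_restrict_of_forall_mem measurableSet_Ioo hgφ0)]
  calc ENNReal.ofReal ((1/2) * (∫ τ in Ioo (0:ℝ) 1, g τ) * (∫ τ in Ioo (0:ℝ) 1, φ τ))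
      = 2⁻¹ * ENNReal.ofReal (∫ τ in Ioo (0:ℝ) 1, g τ)
          * ENNReal.ofReal (∫ τ in Ioo (0:ℝ) 1, φ τ) := by
        rw [ENNReal.ofReal_mul (mul_nonneg (by norm_num)
          (setIntegral_nonneg (μ := volume) measurableSet_Ioo hg0)),
          ENNReal.ofReal_mul (by norm_num), one_div, ENNReal.ofReal_inv_of_pos two_pos,
          ENNReal.ofReal_ofNat]
    _ ≤ 2⁻¹ * (∫⁻ τ in Ioo 0 1, ENNReal.ofReal (g τ))
          * ∫⁻ τ in Ioo 0 1, ENNReal.ofReal (φ τ) := by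
        gcongr
        · exact ofReal_integral_le_lintegral_ofReal
            (ae_restrict_of_forall_mem measurableSet_Ioo hg0) hgm
        · exact ofReal_integral_le_lintegral_ofReal
            (ae_restrict_of_forall_mem measurableSet_Ioo hφ0)
            (aemeasurable_restrict_of_antitoneOn measurableSet_Ioo hφ).aestronglyMeasurable
    _ ≤ ∫⁻ τ in Ioo 0 1, ENNReal.ofReal (g τ) * ENNReal.ofReal (φ τ) :=
        two_inv_mul_lintegral_mul_lintegral_le_lintegral_mul hgm.aemeasurable.ennreal_ofReal
          (fun τ hτ => ENNReal.ofReal_le_ofReal (hg τ hτ)) hφ0 hφ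
    _ = ∫⁻ τ in Ioo 0 1, ENNReal.ofReal (g τ * φ τ) :=
        setLIntegral_congr_fun measurableSet_Ioo fun τ hτ => (ENNReal.ofReal_mul (hg0 τ hτ)).symm

lemma integrableOn_Icc_comp_add_right {h : ℝ → ℝ} {σ a b : ℝ}
    (hh : IntegrableOn h (Icc (a + σ) (b + σ))) :
    IntegrableOn (fun t => h (t + σ)) (Icc a b) := by
  rw [show Icc a b = (· + σ) ⁻¹' Icc (a + σ) (b + σ) by simp]
  exact ((measurePreserving_add_right volume σ).integrableOn_comp_preimage
    (measurableEmbedding_addRight σ)).2 hh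

lemma setIntegral_Icc_comp_add_right (h : ℝ → ℝ) (σ a b : ℝ) :
    ∫ t in Icc a b, h (t + σ) = ∫ t in Icc (a + σ) (b + σ), h t := by
  rw [show Icc a b = (· + σ) ⁻¹' Icc (a + σ) (b + σ) by simp]
  exact (measurePreserving_add_right volume σ).setIntegral_preimage_emb
    (measurableEmbedding_addRight σ) h _

lemma abs_sub_rpow_le_two_rpow_mul {p : ℝ} (hp : 1 ≤ p) (a b c : ℝ) :
    |a - b| ^ p ≤ 2 ^ (p - 1) * (|a - c| ^ p + |c - b| ^ p) := by
  have hconvex : (|a - c| + |c - b|) ^ p ≤ 2 ^ (p - 1) * (|a - c| ^ p + |c - b| ^ p) := by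
    exact_mod_cast NNReal.rpow_add_le_mul_rpow_add_rpow ⟨|a - c|, abs_nonneg _⟩
      ⟨|c - b|, abs_nonneg _⟩ hp
  exact (Real.rpow_le_rpow (abs_nonneg _) (abs_sub_le a c b) (by linarith)).trans hconvex

section Increments

variable {p : ℝ} {f : ℝ → ℝ}

lemma integrableOn_abs_comp_add_sub_rpow (hp : 1 ≤ p) (hfm : Measurable f)
    (hf : ∀ K : Set ℝ, IsCompact K → IntegrableOn (fun t => |f t| ^ p) K) (σ₁ σ₂ a b : ℝ) :
    IntegrableOn (fun t => |f (t + σ₁) - f (t + σ₂)| ^ p) (Icc a b) := by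
  have hshift (σ : ℝ) : IntegrableOn (fun t => |f (t + σ)| ^ p) (Icc a b) :=
    integrableOn_Icc_comp_add_right (hf _ isCompact_Icc)
  have hmeas : Measurable fun t => |f (t + σ₁) - f (t + σ₂)| ^ p :=
    ((hfm.comp (measurable_add_const σ₁)).sub (hfm.comp (measurable_add_const σ₂))).abs.pow_const p
  refine Integrable.mono' (((hshift σ₁).add (hshift σ₂)).const_mul (2 ^ (p - 1)))
    hmeas.aestronglyMeasurable (ae_of_all _ fun t => ?_)
  rw [Real.norm_of_nonneg (by positivity)]
  simpa using abs_sub_rpow_le_two_rpow_mul hp (f (t + σ₁)) (f (t + σ₂)) 0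

lemma setIntegral_abs_sub_rpow_two_mul_le (hp : 1 ≤ p) (hfm : Measurable f)
    (hf : ∀ K : Set ℝ, IsCompact K → IntegrableOn (fun t => |f t| ^ p) K) {σ : ℝ} (hσ : 0 ≤ σ)
    (a b : ℝ) :
    ∫ t in Icc a (b - 2 * σ), |f (t + 2 * σ) - f t| ^ p
      ≤ 2 ^ p * ∫ t in Icc a (b - σ), |f (t + σ) - f t| ^ p := by
  have hint := integrableOn_abs_comp_add_sub_rpow hp hfm hf
  have hint₀ (c d : ℝ) : IntegrableOn (fun t => |f (t + σ) - f t| ^ p) (Icc c d) := by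
    simpa using hint σ 0 c d
  have hnonneg {s : Set ℝ} : 0 ≤ᵐ[volume.restrict s] fun t => |f (t + σ) - f t| ^ p :=
    ae_of_all _ fun t => by positivity
  set I := ∫ t in Icc a (b - σ), |f (t + σ) - f t| ^ p
  have hfirst : ∫ t in Icc a (b - 2 * σ), |f (t + 2 * σ) - f (t + σ)| ^ p ≤ I := by
    calc ∫ t in Icc a (b - 2 * σ), |f (t + 2 * σ) - f (t + σ)| ^ p
        = ∫ t in Icc (a + σ) (b - σ), |f (t + σ) - f t| ^ p := by
          have h := setIntegral_Icc_comp_add_right (fun t => |f (t + σ) - f t| ^ p) σ a (b - 2 * σ)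
          rw [show b - 2 * σ + σ = b - σ by ring] at h
          simpa only [add_assoc, ← two_mul] using h
      _ ≤ I := setIntegral_mono_set (hint₀ _ _) hnonneg
          (Icc_subset_Icc_left (by linarith)).eventuallyLE
  have hsecond : ∫ t in Icc a (b - 2 * σ), |f (t + σ) - f t| ^ p ≤ I :=
    setIntegral_mono_set (hint₀ _ _) hnonneg (Icc_subset_Icc_right (by linarith)).eventuallyLE
  calc ∫ t in Icc a (b - 2 * σ), |f (t + 2 * σ) - f t| ^ p
      ≤ ∫ t in Icc a (b - 2 * σ),
          2 ^ (p - 1) * (|f (t + 2 * σ) - f (t + σ)| ^ p + |f (t + σ) - f t| ^ p) :=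
        setIntegral_mono_on (by simpa using hint (2 * σ) 0 _ _)
          (((hint _ _ _ _).add (hint₀ _ _)).const_mul _) measurableSet_Icc
          fun t _ => abs_sub_rpow_le_two_rpow_mul hp _ _ _
    _ = 2 ^ (p - 1) * ((∫ t in Icc a (b - 2 * σ), |f (t + 2 * σ) - f (t + σ)| ^ p)
          + ∫ t in Icc a (b - 2 * σ), |f (t + σ) - f t| ^ p) := by
        rw [integral_const_mul, integral_add (hint _ _ _ _) (hint₀ _ _)]
    _ ≤ 2 ^ (p - 1) * (I + I) := by gcongr
    _ = 2 ^ p * I := by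
        rw [Real.rpow_sub_one two_ne_zero]
        ring

end Increments

/-- The function `g` of the statement. -/
noncomputable def incrementQuotient (p : ℝ) (f : ℝ → ℝ) (τ : ℝ) : ℝ :=
  τ ^ (-p) * ∫ t in Icc (-(1:ℝ)/2) (1/2 - τ), |f (t + τ) - f t| ^ p

lemma incrementQuotient_nonneg {p : ℝ} {f : ℝ → ℝ} {τ : ℝ} (hτ : 0 ≤ τ) :
    0 ≤ incrementQuotient p f τ :=
  mul_nonneg (Real.rpow_nonneg hτ _)
    (setIntegral_nonneg measurableSet_Icc fun _ _ => by positivity)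

lemma incrementQuotient_two_mul_le {p : ℝ} {f : ℝ → ℝ} (hp : 1 ≤ p) (hfm : Measurable f)
    (hf : ∀ K : Set ℝ, IsCompact K → IntegrableOn (fun t => |f t| ^ p) K) {σ : ℝ} (hσ : 0 < σ) :
    incrementQuotient p f (2 * σ) ≤ incrementQuotient p f σ := by
  unfold incrementQuotient
  calc (2 * σ) ^ (-p) * ∫ t in Icc (-(1:ℝ)/2) (1/2 - 2 * σ), |f (t + 2 * σ) - f t| ^ p
      ≤ (2 * σ) ^ (-p) * (2 ^ p * ∫ t in Icc (-(1:ℝ)/2) (1/2 - σ), |f (t + σ) - f t| ^ p) := by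
        gcongr
        exact setIntegral_abs_sub_rpow_two_mul_le hp hfm hf hσ.le _ _
    _ = σ ^ (-p) * ∫ t in Icc (-(1:ℝ)/2) (1/2 - σ), |f (t + σ) - f t| ^ p := by
        rw [Real.mul_rpow zero_le_two hσ.le, Real.rpow_neg zero_le_two]
        field_simp

theorem stmt3_general (p : ℝ) (hp : 1 ≤ p) (f : ℝ → ℝ) (hfm : Measurable f)
    (hf : ∀ K : Set ℝ, IsCompact K → IntegrableOn (fun t => |f t| ^ p) K)
    (g : ℝ → ℝ)
    (hg : ∀ τ : ℝ, g τ =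
      τ ^ (-p) * ∫ t in Icc (-(1:ℝ)/2) (1/2 - τ), |f (t + τ) - f t| ^ p)
    (φ : ℝ → ℝ) (hφ0 : ∀ τ ∈ Ioo (0:ℝ) 1, 0 ≤ φ τ)
    (hφmono : AntitoneOn φ (Ioo (0:ℝ) 1))
    (hgint : IntegrableOn g (Ioo (0:ℝ) 1))
    (hgφint : IntegrableOn (fun τ => g τ * φ τ) (Ioo (0:ℝ) 1)) :
    (1/2) * (∫ τ in Ioo (0:ℝ) 1, g τ) * (∫ τ in Ioo (0:ℝ) 1, φ τ)
      ≤ ∫ τ in Ioo (0:ℝ) 1, g τ * φ τ := by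
  obtain rfl : g = incrementQuotient p f := funext hg
  refine half_mul_integral_mul_integral_le_integral_mul
    (fun τ hτ => incrementQuotient_nonneg hτ.1.le) (fun τ hτ => ?_) hgint.aestronglyMeasurable
    hφ0 hφmono hgφint
  simpa [mul_div_cancel₀] using incrementQuotient_two_mul_le hp hfm hf (half_pos hτ.1)

theorem stmt3 (p : ℝ) (hp : 1 ≤ p) (f : ℝ → ℝ) (hfm : Measurable f)
    (hf : ∀ K : Set ℝ, IsCompact K → IntegrableOn (fun t => |f t| ^ p) K)
    (g : ℝ → ℝ)
    (hg : ∀ τ : ℝ, g τ =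
      τ ^ (-p) * ∫ t in Icc (-(1:ℝ)/2) (1/2 - τ), |f (t + τ) - f t| ^ p)
    (φ : ℝ → ℝ) (hφ0 : ∀ τ ∈ Ioo (0:ℝ) 1, 0 ≤ φ τ)
    (hφmono : AntitoneOn φ (Ioo (0:ℝ) 1))
    (hgint : IntegrableOn g (Ioo (0:ℝ) 1))
    (hφint : IntegrableOn φ (Ioo (0:ℝ) 1))
    (hgφint : IntegrableOn (fun τ => g τ * φ τ) (Ioo (0:ℝ) 1)) :
    (1/2) * (∫ τ in Ioo (0:ℝ) 1, g τ) * (∫ τ in Ioo (0:ℝ) 1, φ τ)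
      ≤ ∫ τ in Ioo (0:ℝ) 1, g τ * φ τ :=
  stmt3_general p hp f hfm hf g hg φ hφ0 hφmono hgint hgφint
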